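/- arXiv:1807.08424 — 7 statements merged into one kernel-verified Lean document; each statement's English description precedes it below -/
import Mathlib

section
/- Let H^{(1)}, …, H^{(m)} each be a one-dimensional k-local Hamiltonian with unit-norm terms on the n-site chain, and let O be an operator supported on an adjacent interval L of sites with |L| = l₀. Then ‖ad_{H^{(m)}} ∘ ⋯ ∘ ad_{H^{(2)}} ∘ ad_{H^{(1)}}(O)‖ ≤ ‖O‖ · Σ_{π ∈ {−1,0,+1}^m} Π_{s=1}^m 2·K_s(π), where K_s(π) := k − 1 if π_s ≠ 0, and K_s(π) := l₀ + (k−1)·#{ j < s : π_j ≠ 0 } if π_s = 0. -/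
open scoped Matrix.Norms.L2Operator

/-- Operators on the `n`-site chain with local dimension `d`: matrices indexed by
configurations `Fin n → Fin d`, acting on `(ℂ^d)^{⊗n}`, with the ℓ²→ℓ² operator norm. -/
abbrev ChainOp (n d : ℕ) := Matrix (Fin n → Fin d) (Fin n → Fin d) ℂ

/-- `M` is supported on the set of sites `L`: entries vanish whenever the two configurations
differ at a site outside `L`, and entries depend only on the restrictions of the
configurations to `L`. -/
def SupportedOn {n d : ℕ} (M : ChainOp n d) (L : Finset (Fin n)) : Prop :=
  (∀ x y : Fin n → Fin d, (∃ i ∉ L, x i ≠ y i) → M x y = 0) ∧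
  (∀ x y x' y' : Fin n → Fin d,
      (∀ i ∈ L, x i = x' i) → (∀ i ∈ L, y i = y' i) →
      (∀ i ∉ L, x i = y i) → (∀ i ∉ L, x' i = y' i) → M x y = M x' y')

/-- The interval of sites `{i : a ≤ i ≤ b}` (automatically intersected with `{0,…,n-1}`). -/
def chainInterval (n : ℕ) (a b : ℕ) : Finset (Fin n) :=
  Finset.univ.filter fun i : Fin n => a ≤ (i : ℕ) ∧ (i : ℕ) ≤ b

/-- `H` is a one-dimensional `k`-local Hamiltonian with unit-norm terms:
`H = Σ_j h_j` where `h_j` is supported on `{j, …, j+k-1} ∩ {0,…,n-1}` and `‖h_j‖ ≤ 1`. -/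
def IsLocalHam (n d k : ℕ) (H : ChainOp n d) : Prop :=
  ∃ h : Fin n → ChainOp n d,
    H = ∑ j, h j ∧
    ∀ j : Fin n, SupportedOn (h j) (chainInterval n j ((j : ℕ) + k - 1)) ∧ ‖h j‖ ≤ 1


/-- The adjoint action `ad_H(O) := H·O − O·H`. -/
-- (noncomputable since matrix multiplication over ℂ is noncomputable)
noncomputable def ad {n d : ℕ} (H O : ChainOp n d) : ChainOp n d := H * O - O * H

/-- The iterated commutator `ad_{H^{(m)}} ∘ ⋯ ∘ ad_{H^{(2)}} ∘ ad_{H^{(1)}} (O)`. -/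
noncomputable def multiAd {n d : ℕ} : {m : ℕ} → (Fin m → ChainOp n d) → ChainOp n d → ChainOp n d
  | 0, _, O => O
  | m + 1, Hs, O => ad (Hs (Fin.last m)) (multiAd (fun j => Hs j.castSucc) O)

/-- The factor `K_s(π)`: it equals `k − 1` if `π_s ≠ 0`, and
`l₀ + (k−1)·#{j < s : π_j ≠ 0}` if `π_s = 0`. -/
def Kfac (k l₀ : ℕ) {m : ℕ} (π : Fin m → SignType) (s : Fin m) : ℕ :=
  if π s = 0 then
    l₀ + (k - 1) * (Finset.univ.filter fun j : Fin m => j < s ∧ π j ≠ 0).card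
  else k - 1

/-!
Expand each `ad_{H^{(s)}} = Σ_j ad_{h_j}`. A term whose window `[j, j + k - 1]` misses the
current support interval of the operator commutes with it and drops out; the others are sorted
by whether the window sticks out of that interval on the left (`π_s = -1`), lies inside it
(`π_s = 0`) or sticks out on the right (`π_s = +1`). At most `k - 1` windows stick out on either
side, and each of them enlarges the support by at most `k - 1` sites on its side, so before step
`s` the support has at most `l₀ + (k - 1)·#{j < s : π_j ≠ 0}` sites, which bounds the number of
windows inside it. Each term costs `‖ad_{h_j}‖ ≤ 2`, and the triangle inequality over the `3^m`
sign patterns gives the bound.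
-/

namespace SupportedOn

variable {n d : ℕ} {M N : ChainOp n d} {L L' L₁ L₂ : Finset (Fin n)}

theorem apply_eq_zero (h : SupportedOn M L) {x y : Fin n → Fin d} {i : Fin n} (hi : i ∉ L)
    (hxy : x i ≠ y i) : M x y = 0 :=
  h.1 x y ⟨i, hi, hxy⟩

theorem mono (h : SupportedOn M L) (hL : L ⊆ L') : SupportedOn M L' := by
  refine ⟨fun x y ⟨i, hi, hxy⟩ => h.apply_eq_zero (fun hiL => hi (hL hiL)) hxy,
    fun x y x' y' hx hy hxy hx'y' => ?_⟩
  by_cases hxyL : ∀ i ∉ L, x i = y i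
  · refine h.2 x y x' y' (fun i hi => hx i (hL hi)) (fun i hi => hy i (hL hi)) hxyL
      fun i hi => ?_
    by_cases hi' : i ∈ L'
    · rw [← hx i hi', ← hy i hi', hxyL i hi]
    · exact hx'y' i hi'
  · push Not at hxyL
    obtain ⟨i, hi, hne⟩ := hxyL
    have hiL' : i ∈ L' := by_contra fun hi' => hne (hxy i hi')
    rw [h.apply_eq_zero hi hne, h.apply_eq_zero hi (by rwa [← hx i hiL', ← hy i hiL'])]

theorem apply_piCongrRight (h : SupportedOn M L) {e : Fin n → Equiv.Perm (Fin d)}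
    (he : ∀ i ∈ L, e i = 1) (x y : Fin n → Fin d) :
    M (Equiv.piCongrRight e x) (Equiv.piCongrRight e y) = M x y := by
  by_cases hxy : ∀ i ∉ L, x i = y i
  · exact (h.2 x y _ _ (fun i hi => by simp [he i hi]) (fun i hi => by simp [he i hi]) hxy
      fun i hi => by simp [hxy i hi]).symm
  · push Not at hxy
    obtain ⟨i, hi, hne⟩ := hxy
    rw [h.apply_eq_zero hi hne, h.apply_eq_zero hi (by simpa using hne)]

theorem mul (hM : SupportedOn M L) (hN : SupportedOn N L) : SupportedOn (M * N) L := by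
  refine ⟨fun x y ⟨i, hi, hxy⟩ => ?_, fun x y x' y' hx hy hxy hx'y' => ?_⟩
  · rw [Matrix.mul_apply]
    refine Finset.sum_eq_zero fun z _ => ?_
    by_cases hz : x i = z i
    · rw [hN.apply_eq_zero hi (hz ▸ hxy), mul_zero]
    · rw [hM.apply_eq_zero hi hz, zero_mul]
  · -- swapping `x i` and `x' i` at every site `i ∉ L` carries `(x, y)` to `(x', y')`
    set e : Fin n → Equiv.Perm (Fin d) := fun i => if i ∈ L then 1 else Equiv.swap (x i) (x' i)
    have he : ∀ i ∈ L, e i = 1 := fun i hi => if_pos hi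
    have hex : Equiv.piCongrRight e x = x' := funext fun i => by
      by_cases hi : i ∈ L <;> simp [e, hi, hx]
    have hey : Equiv.piCongrRight e y = y' := funext fun i => by
      by_cases hi : i ∈ L
      · simp [e, hi, hy]
      · simp [e, hi, ← hxy i hi, hx'y' i hi]
    rw [← hex, ← hey, Matrix.mul_apply, Matrix.mul_apply,
      ← (Equiv.piCongrRight e).sum_comp
        (fun z => M (Equiv.piCongrRight e x) z * N z (Equiv.piCongrRight e y))]
    simp only [hM.apply_piCongrRight he, hN.apply_piCongrRight he]

theorem add (hM : SupportedOn M L) (hN : SupportedOn N L) : SupportedOn (M + N) L :=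
  ⟨fun x y h => by simp [hM.1 x y h, hN.1 x y h],
    fun x y x' y' hx hy hxy hx'y' => by
      simp [hM.2 x y x' y' hx hy hxy hx'y', hN.2 x y x' y' hx hy hxy hx'y']⟩

theorem algebraMap (c : ℂ) (L : Finset (Fin n)) :
    SupportedOn (algebraMap ℂ (ChainOp n d) c) L := by
  refine ⟨fun x y ⟨i, _, hxy⟩ => ?_, fun x y x' y' hx hy hxy hx'y' => ?_⟩
  · have : x ≠ y := fun h => hxy (congrFun h i)
    simp [Matrix.algebraMap_matrix_apply, this]
  · have : x = y ↔ x' = y' := by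
      simp only [funext_iff]
      refine forall_congr' fun i => ?_
      by_cases hi : i ∈ L
      · rw [hx i hi, hy i hi]
      · simp [hxy i hi, hx'y' i hi]
    simp [Matrix.algebraMap_matrix_apply, this]

end SupportedOn

/-- The algebra `B((ℂ^d)^{⊗L}) ⊗ 1`. -/
def supportedSubalgebra (n d : ℕ) (L : Finset (Fin n)) : Subalgebra ℂ (ChainOp n d) where
  carrier := {M | SupportedOn M L}
  mul_mem' := SupportedOn.mul
  add_mem' := SupportedOn.add
  algebraMap_mem' c := SupportedOn.algebraMap c L

namespace SupportedOn

variable {n d : ℕ} {M N : ChainOp n d} {L L₁ L₂ : Finset (Fin n)}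

theorem sum {ι : Type*} {s : Finset ι} {f : ι → ChainOp n d}
    (h : ∀ j ∈ s, SupportedOn (f j) L) : SupportedOn (∑ j ∈ s, f j) L :=
  Subalgebra.sum_mem (supportedSubalgebra n d L) h

theorem ad (hM : SupportedOn M L) (hN : SupportedOn N L) : SupportedOn (ad M N) L :=
  Subalgebra.sub_mem (supportedSubalgebra n d L) (hM.mul hN) (hN.mul hM)

theorem mul_apply_of_disjoint (hM : SupportedOn M L₁) (hN : SupportedOn N L₂)
    (h : Disjoint L₁ L₂) (x y : Fin n → Fin d) :
    (M * N) x y = M x (L₁.piecewise y x) * N (L₁.piecewise y x) y := by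
  rw [Matrix.mul_apply]
  refine Finset.sum_eq_single _ (fun z _ hz => ?_) (by simp)
  obtain ⟨i, hi⟩ := Function.ne_iff.1 hz
  by_cases hi₁ : i ∈ L₁
  · rw [Finset.piecewise_eq_of_mem _ _ _ hi₁] at hi
    rw [hN.apply_eq_zero (Finset.disjoint_left.1 h hi₁) hi, mul_zero]
  · rw [Finset.piecewise_eq_of_notMem _ _ _ hi₁] at hi
    rw [hM.apply_eq_zero hi₁ (Ne.symm hi), zero_mul]

theorem commute_of_disjoint (hM : SupportedOn M L₁) (hN : SupportedOn N L₂)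
    (h : Disjoint L₁ L₂) : Commute M N := by
  ext x y
  by_cases hxy : ∀ i ∉ L₁ ∪ L₂, x i = y i
  · simp only [Finset.mem_union, not_or, and_imp] at hxy
    rw [hM.mul_apply_of_disjoint hN h, hN.mul_apply_of_disjoint hM h.symm, mul_comm (N x _)]
    have h₁₂ := Finset.disjoint_left.1 h
    have h₂₁ := Finset.disjoint_right.1 h
    congr 1
    · refine hM.2 _ _ _ _ (fun i hi => by simp [h₁₂ hi]) (fun i hi => by simp [hi])
        (fun i hi => by simp [hi]) fun i hi => ?_
      by_cases hi₂ : i ∈ L₂ <;> simp [hi₂, hxy i hi]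
    · refine (hN.2 _ _ _ _ (fun i hi => by simp [h₂₁ hi]) (fun i hi => by simp [hi])
        (fun i hi => by simp [hi]) fun i hi => ?_).symm
      by_cases hi₁ : i ∈ L₁
      · simp [hi₁]
      · simp [hi₁, hxy i hi₁ hi]
  · push Not at hxy
    obtain ⟨i, hi, hne⟩ := hxy
    have hMu := hM.mono (L' := L₁ ∪ L₂) Finset.subset_union_left
    have hNu := hN.mono (L' := L₁ ∪ L₂) Finset.subset_union_right
    rw [(hMu.mul hNu).apply_eq_zero hi hne, (hNu.mul hMu).apply_eq_zero hi hne]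

end SupportedOn

section ChainInterval

variable {n : ℕ}

@[simp]
theorem mem_chainInterval {a b : ℕ} {i : Fin n} :
    i ∈ chainInterval n a b ↔ a ≤ (i : ℕ) ∧ (i : ℕ) ≤ b := by
  simp [chainInterval]

theorem chainInterval_mono {a₁ b₁ a₂ b₂ : ℕ} (ha : a₂ ≤ a₁) (hb : b₁ ≤ b₂) :
    chainInterval n a₁ b₁ ⊆ chainInterval n a₂ b₂ := fun i hi => by
  simp only [mem_chainInterval] at hi ⊢
  omega

theorem disjoint_chainInterval {a₁ b₁ a₂ b₂ : ℕ} (h : b₁ < a₂ ∨ b₂ < a₁) :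
    Disjoint (chainInterval n a₁ b₁) (chainInterval n a₂ b₂) :=
  Finset.disjoint_left.2 fun i hi₁ hi₂ => by
    simp only [mem_chainInterval] at hi₁ hi₂
    omega

theorem Fin.card_le_of_forall_val_mem_Ico {s : Finset (Fin n)} {lo hi : ℕ}
    (h : ∀ j ∈ s, lo ≤ (j : ℕ) ∧ (j : ℕ) < hi) : s.card ≤ hi - lo := by
  rw [← Nat.card_Ico]
  exact Finset.card_le_card_of_injOn Fin.val (fun j hj => Finset.mem_Ico.2 (h j hj))
    Fin.val_injective.injOn

theorem card_chainInterval (a b : ℕ) : (chainInterval n a b).card = min (b + 1) n - a := by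
  rw [← Nat.card_Ico, ← Finset.card_map Fin.valEmbedding]
  congr 1
  ext v
  simp only [Finset.mem_map, mem_chainInterval, Fin.valEmbedding_apply, Finset.mem_Ico]
  constructor
  · rintro ⟨i, hi, rfl⟩
    omega
  · intro hv
    exact ⟨⟨v, by omega⟩, by simp only; omega, rfl⟩

end ChainInterval

section Commutator

variable {n d : ℕ}

theorem ad_sum_left {ι : Type*} (s : Finset ι) (h : ι → ChainOp n d) (T : ChainOp n d) :
    ad (∑ j ∈ s, h j) T = ∑ j ∈ s, ad (h j) T := by
  simp only [ad, Finset.sum_mul, Finset.mul_sum, Finset.sum_sub_distrib]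

theorem ad_sum_right {ι : Type*} (s : Finset ι) (H : ChainOp n d) (T : ι → ChainOp n d) :
    ad H (∑ j ∈ s, T j) = ∑ j ∈ s, ad H (T j) := by
  simp only [ad, Finset.sum_mul, Finset.mul_sum, Finset.sum_sub_distrib]

theorem norm_ad_le (H T : ChainOp n d) : ‖ad H T‖ ≤ 2 * ‖H‖ * ‖T‖ :=
  calc ‖H * T - T * H‖ ≤ ‖H * T‖ + ‖T * H‖ := norm_sub_le _ _
    _ ≤ ‖H‖ * ‖T‖ + ‖T‖ * ‖H‖ := add_le_add (norm_mul_le _ _) (norm_mul_le _ _)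
    _ = 2 * ‖H‖ * ‖T‖ := by ring

theorem norm_sum_ad_le {ι : Type*} (s : Finset ι) {h : ι → ChainOp n d}
    (hh : ∀ j ∈ s, ‖h j‖ ≤ 1) (T : ChainOp n d) :
    ‖∑ j ∈ s, ad (h j) T‖ ≤ 2 * s.card * ‖T‖ :=
  calc ‖∑ j ∈ s, ad (h j) T‖ ≤ ∑ j ∈ s, ‖ad (h j) T‖ := norm_sum_le _ _
    _ ≤ ∑ _j ∈ s, 2 * ‖T‖ := Finset.sum_le_sum fun j hj =>
        (norm_ad_le _ _).trans (by nlinarith [hh j hj, norm_nonneg T])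
    _ = 2 * s.card * ‖T‖ := by rw [Finset.sum_const, nsmul_eq_mul]; ring

theorem ad_eq_zero_of_disjoint {H T : ChainOp n d} {L₁ L₂ : Finset (Fin n)}
    (hH : SupportedOn H L₁) (hT : SupportedOn T L₂) (h : Disjoint L₁ L₂) : ad H T = 0 :=
  sub_eq_zero.2 (hH.commute_of_disjoint hT h)

end Commutator

/-- On which side the window `[j, j + k - 1]` of a `k`-local term sticks out of `[a, b]`. -/
def overhang (k a b j : ℕ) : SignType :=
  if j < a then -1 else if b < j + k - 1 then 1 else 0

theorem overhang_window {k a b j : ℕ} (hab : a + k ≤ b + 2) (hja : a ≤ j + k - 1) (hjb : j ≤ b) :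
    (a - if overhang k a b j = -1 then k - 1 else 0) ≤ j ∧
      j + k - 1 ≤ b + if overhang k a b j = 1 then k - 1 else 0 := by
  unfold overhang
  split_ifs <;> simp_all <;> omega

def windowsMeeting (n k a b : ℕ) : Finset (Fin n) :=
  Finset.univ.filter fun j => a ≤ (j : ℕ) + k - 1 ∧ (j : ℕ) ≤ b

@[simp]
theorem mem_windowsMeeting {n k a b : ℕ} {j : Fin n} :
    j ∈ windowsMeeting n k a b ↔ a ≤ (j : ℕ) + k - 1 ∧ (j : ℕ) ≤ b := by
  simp [windowsMeeting]

theorem card_filter_overhang_le {n k a b : ℕ} (σ : SignType) :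
    ((windowsMeeting n k a b).filter fun j : Fin n => overhang k a b j = σ).card ≤
      if σ = 0 then min (b + 2 - k) n - a else k - 1 := by
  have hval : ∀ j ∈ (windowsMeeting n k a b).filter fun j : Fin n => overhang k a b j = σ,
      (if σ = -1 then a - (k - 1) else if σ = 1 then b + 2 - k else a) ≤ (j : ℕ) ∧
        (j : ℕ) < if σ = -1 then a else if σ = 1 then b + 1 else min (b + 2 - k) n := by
    intro j hj
    simp only [Finset.mem_filter, mem_windowsMeeting] at hj
    obtain ⟨⟨hja, hjb⟩, rfl⟩ := hj
    have := j.isLt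
    unfold overhang
    split_ifs <;> simp_all <;> omega
  refine (Fin.card_le_of_forall_val_mem_Ico hval).trans ?_
  rcases σ with _ | _ | _ <;> simp <;> omega

theorem IsLocalHam.exists_ad_eq_sum {n d k a b : ℕ} {H T : ChainOp n d}
    (hH : IsLocalHam n d k H) (hab : a + k ≤ b + 2) (hT : SupportedOn T (chainInterval n a b)) :
    ∃ f : SignType → ChainOp n d, ad H T = ∑ σ, f σ ∧ ∀ σ,
      SupportedOn (f σ)
        (chainInterval n (a - if σ = -1 then k - 1 else 0) (b + if σ = 1 then k - 1 else 0)) ∧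
      ‖f σ‖ ≤ 2 * ((if σ = 0 then min (b + 2 - k) n - a else k - 1 : ℕ) : ℝ) * ‖T‖ := by
  classical
  obtain ⟨h, rfl, hh⟩ := hH
  set C : SignType → Finset (Fin n) := fun σ =>
    (windowsMeeting n k a b).filter fun j : Fin n => overhang k a b j = σ
  refine ⟨fun σ => ∑ j ∈ C σ, ad (h j) T, ?_, fun σ => ⟨?_, ?_⟩⟩
  · rw [Finset.sum_fiberwise, ad_sum_left]
    refine (Finset.sum_subset (Finset.subset_univ _) fun j _ hj =>
      ad_eq_zero_of_disjoint (hh j).1 hT (disjoint_chainInterval ?_)).symm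
    rw [mem_windowsMeeting] at hj
    omega
  · refine SupportedOn.sum fun j hj => ?_
    simp only [C, Finset.mem_filter, mem_windowsMeeting] at hj
    obtain ⟨⟨hja, hjb⟩, rfl⟩ := hj
    obtain ⟨hlo, hhi⟩ := overhang_window hab hja hjb
    exact ((hh j).1.mono (chainInterval_mono hlo hhi)).ad
      (hT.mono (chainInterval_mono (Nat.sub_le _ _) (Nat.le_add_right _ _)))
  · refine (norm_sum_ad_le _ (fun j _ => (hh j).2) T).trans ?_
    gcongr
    exact card_filter_overhang_le σ

section Paths

variable {m : ℕ}

def leftSteps (π : Fin m → SignType) : ℕ := (Finset.univ.filter fun s => π s = -1).card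

def rightSteps (π : Fin m → SignType) : ℕ := (Finset.univ.filter fun s => π s = 1).card

theorem card_filter_snoc (π : Fin m → SignType) (σ : SignType) (p : SignType → Prop)
    [DecidablePred p] :
    (Finset.univ.filter fun s => p (Fin.snoc (α := fun _ => SignType) π σ s)).card =
      (Finset.univ.filter fun s => p (π s)).card + if p σ then 1 else 0 := by
  simp only [Finset.card_filter, Fin.sum_univ_castSucc, Fin.snoc_castSucc, Fin.snoc_last]

theorem leftSteps_snoc (π : Fin m → SignType) (σ : SignType) :
    leftSteps (Fin.snoc π σ : Fin (m + 1) → SignType) =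
      leftSteps π + if σ = -1 then 1 else 0 :=
  card_filter_snoc π σ (· = -1)

theorem rightSteps_snoc (π : Fin m → SignType) (σ : SignType) :
    rightSteps (Fin.snoc π σ : Fin (m + 1) → SignType) =
      rightSteps π + if σ = 1 then 1 else 0 :=
  card_filter_snoc π σ (· = 1)

theorem card_filter_ne_zero (π : Fin m → SignType) :
    (Finset.univ.filter fun s => π s ≠ 0).card = leftSteps π + rightSteps π := by
  simp only [leftSteps, rightSteps, Finset.card_filter, ← Finset.sum_add_distrib]
  refine Finset.sum_congr rfl fun s _ => ?_
  cases π s <;> rfl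

theorem Kfac_snoc_castSucc (k l₀ : ℕ) (π : Fin m → SignType) (σ : SignType) (s : Fin m) :
    Kfac k l₀ (Fin.snoc π σ : Fin (m + 1) → SignType) s.castSucc = Kfac k l₀ π s := by
  simp only [Kfac, Fin.snoc_castSucc, Finset.card_filter, Fin.sum_univ_castSucc,
    Fin.castSucc_lt_castSucc_iff, Fin.snoc_last, lt_asymm (Fin.castSucc_lt_last s), false_and,
    if_false, add_zero]

theorem Kfac_snoc_last (k l₀ : ℕ) (π : Fin m → SignType) (σ : SignType) :
    Kfac k l₀ (Fin.snoc π σ : Fin (m + 1) → SignType) (Fin.last m) =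
      if σ = 0 then l₀ + (k - 1) * (leftSteps π + rightSteps π) else k - 1 := by
  rw [← card_filter_ne_zero]
  simp only [Kfac, Fin.snoc_last, Finset.card_filter, Fin.sum_univ_castSucc, Fin.snoc_castSucc,
    Fin.castSucc_lt_last, true_and, lt_irrefl, false_and, if_false, add_zero]

end Paths

/-- Padding the support to at least `k - 1` sites keeps `a + k ≤ b + 2` along the induction, so
that no window sticks out of the support on both sides. -/
theorem exists_multiAd_eq_sum {n d k m a b : ℕ} {Hs : Fin m → ChainOp n d} {O : ChainOp n d}
    (hk : 1 ≤ k) (hHs : ∀ s, IsLocalHam n d k (Hs s)) (hO : SupportedOn O (chainInterval n a b)) :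
    ∃ T : (Fin m → SignType) → ChainOp n d, multiAd Hs O = ∑ π, T π ∧ ∀ π,
      SupportedOn (T π) (chainInterval n (a - (k - 1) * leftSteps π)
        (max b (a + k - 2) + (k - 1) * rightSteps π)) ∧
      ‖T π‖ ≤ ‖O‖ * ∏ s, ((2 * Kfac k (chainInterval n a b).card π s : ℕ) : ℝ) := by
  set l₀ := (chainInterval n a b).card
  have hl₀ : l₀ = min (b + 1) n - a := card_chainInterval a b
  induction m with
  | zero =>
    refine ⟨fun _ => O, by simp [multiAd], fun π => ⟨hO.mono ?_, by simp⟩⟩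
    exact chainInterval_mono (Nat.sub_le _ _) (le_max_left _ _ |>.trans (Nat.le_add_right _ _))
  | succ m ih =>
    obtain ⟨T, hT, hTπ⟩ := ih (fun s => hHs s.castSucc)
    choose f hf hfσ using fun π => (hHs (Fin.last m)).exists_ad_eq_sum (by omega) (hTπ π).1
    refine ⟨fun π => f (Fin.init π) (π (Fin.last m)), ?_, fun π => ?_⟩
    · rw [multiAd, hT, ad_sum_right]
      refine (Finset.sum_congr rfl fun π _ => hf π).trans ?_
      rw [Finset.sum_comm, ← Fintype.sum_prod_type']
      exact (Fintype.sum_equiv (Fin.snocEquiv fun _ => SignType).symm _ _ fun _ => rfl).symm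
    · cases π using Fin.snocCases with
      | snoc π σ =>
        simp only [Fin.init_snoc, Fin.snoc_last]
        obtain ⟨hsupp, hnorm⟩ := hfσ π σ
        refine ⟨hsupp.mono (chainInterval_mono ?_ ?_), hnorm.trans ?_⟩
        · rw [leftSteps_snoc, mul_add]
          split_ifs <;> omega
        · rw [rightSteps_snoc, mul_add]
          split_ifs <;> omega
        · rw [Fin.prod_univ_castSucc]
          simp only [Kfac_snoc_castSucc]
          calc _ ≤ 2 * (Kfac k l₀ (Fin.snoc π σ : Fin (m + 1) → SignType) (Fin.last m) : ℝ) *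
                (‖O‖ * ∏ s, ((2 * Kfac k l₀ π s : ℕ) : ℝ)) := by
                gcongr
                · rw [Kfac_snoc_last, mul_add]
                  split_ifs <;> omega
                · exact (hTπ π).2
            _ = _ := by push_cast; ring

theorem multi_commutator_norm_bound_general
    (n d k : ℕ) (hk : 2 ≤ k)
    (m : ℕ) (Hs : Fin m → ChainOp n d) (hHs : ∀ s : Fin m, IsLocalHam n d k (Hs s))
    (a b l₀ : ℕ) (O : ChainOp n d)
    (hO : SupportedOn O (chainInterval n a b))
    (hl₀ : (chainInterval n a b).card = l₀) :
    ‖multiAd Hs O‖ ≤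
      ‖O‖ * ∑ π : Fin m → SignType, ∏ s : Fin m, ((2 * Kfac k l₀ π s : ℕ) : ℝ) := by
  obtain ⟨T, hsum, hT⟩ := exists_multiAd_eq_sum (by omega) hHs hO
  subst hl₀
  calc ‖multiAd Hs O‖ ≤ ∑ π, ‖T π‖ := hsum ▸ norm_sum_le _ _
    _ ≤ ∑ π, ‖O‖ * ∏ s, ((2 * Kfac k (chainInterval n a b).card π s : ℕ) : ℝ) :=
        Finset.sum_le_sum fun π _ => (hT π).2
    _ = _ := (Finset.mul_sum _ _ _).symm

/-- Lemma 3 of the paper: the norm of the iterated commutator of one-dimensional `k`-local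
Hamiltonians with unit-norm terms, applied to an operator `O` supported on an interval of
`l₀` sites, is bounded by `‖O‖ · Σ_{π ∈ {−1,0,+1}^m} Π_{s=1}^m 2·K_s(π)`. -/
theorem multi_commutator_norm_bound
    (n d k : ℕ) (hn : 1 ≤ n) (hd : 2 ≤ d) (hk : 2 ≤ k)
    (m : ℕ) (Hs : Fin m → ChainOp n d) (hHs : ∀ s : Fin m, IsLocalHam n d k (Hs s))
    (a b l₀ : ℕ) (O : ChainOp n d)
    (hO : SupportedOn O (chainInterval n a b))
    (hl₀ : (chainInterval n a b).card = l₀) :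
    ‖multiAd Hs O‖ ≤
      ‖O‖ * ∑ π : Fin m → SignType, ∏ s : Fin m, ((2 * Kfac k l₀ π s : ℕ) : ℝ) :=
  multi_commutator_norm_bound_general n d k hk m Hs hHs a b l₀ O hO hl₀
end

section
/- Fix integers m ≥ 1, k ≥ 2, l₀ ≥ 1 and an integer q with 0 ≤ q ≤ m. Define, for π ∈ {−1,0,+1}^m, K_s(π) := k − 1 if π_s ≠ 0 and K_s(π) := l₀ + (k−1)·#{ j < s : π_j ≠ 0 } if π_s = 0. Then the partial sum N_{m,q} := Σ_{π : exactly q entries of π are nonzero} Π_{s=1}^m 2·K_s(π) satisfies N_{m,q} ≤ C(m,q) · 2^{m+q} · k^m · (q + l₀/k)^{m−q}, where C(m,q) is the binomial coefficient. -/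
open Finset

section SignPatterns

variable {ι : Type*} [Fintype ι] [DecidableEq ι]

theorem card_signPatterns_le (q : ℕ) :
    #{π : ι → SignType | #{s | π s ≠ 0} = q} ≤ (Fintype.card ι).choose q * 2 ^ q := by
  let code : (ι → SignType) → Σ _ : Finset ι, Finset ι :=
    fun π => ⟨({s | π s ≠ 0} : Finset ι), ({s | π s = 1} : Finset ι)⟩
  have hcode_maps : ∀ π ∈ ({π : ι → SignType | #{s | π s ≠ 0} = q} : Finset _),
      code π ∈ (powersetCard q univ).sigma powerset := by
    intro π hπ
    simp only [mem_filter, mem_univ, true_and] at hπ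
    refine mem_sigma.mpr ⟨mem_powersetCard.mpr ⟨subset_univ _, hπ⟩, mem_powerset.mpr ?_⟩
    exact monotone_filter_right _ fun _ _ h => h ▸ one_ne_zero
  have hcode_inj : Function.Injective code := by
    intro π π' h
    obtain ⟨hsupp, hone⟩ := Sigma.mk.inj_iff.mp h
    replace hone := eq_of_heq hone
    funext s
    have h0 : π s ≠ 0 ↔ π' s ≠ 0 := by simpa using congrArg (s ∈ ·) hsupp
    have h1 : π s = 1 ↔ π' s = 1 := by simpa using congrArg (s ∈ ·) hone
    cases hs : π s <;> cases hs' : π' s <;> simp_all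
  calc #{π : ι → SignType | #{s | π s ≠ 0} = q}
      ≤ #((powersetCard q univ).sigma powerset) :=
        card_le_card_of_injOn code hcode_maps hcode_inj.injOn
    _ = (Fintype.card ι).choose q * 2 ^ q := by
        rw [card_sigma, sum_congr rfl fun S hS => by rw [card_powerset, (mem_powersetCard.mp hS).2],
          sum_const, card_powersetCard, card_univ, smul_eq_mul]

end SignPatterns

section Kfac

variable {m : ℕ} (k l₀ : ℕ) (π : Fin m → SignType)

theorem Kfac_le (s : Fin m) :
    Kfac k l₀ π s ≤ if π s = 0 then k * #{j | π j ≠ 0} + l₀ else k := by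
  unfold Kfac
  split_ifs
  · have hearlier : #{j | j < s ∧ π j ≠ 0} ≤ #{j | π j ≠ 0} :=
      card_le_card <| monotone_filter_right _ fun _ _ h => h.2
    have := Nat.mul_le_mul (Nat.sub_le k 1) hearlier
    omega
  · exact Nat.sub_le k 1

theorem prod_two_mul_Kfac_le :
    ∏ s, 2 * Kfac k l₀ π s ≤
      (2 * k) ^ #{j | π j ≠ 0} * (2 * (k * #{j | π j ≠ 0} + l₀)) ^ (m - #{j | π j ≠ 0}) := by
  have hzeros : #{j | π j = 0} = m - #{j | π j ≠ 0} := by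
    have := card_filter_add_card_filter_not (s := univ) fun j => π j = 0
    simp only [card_univ, Fintype.card_fin, ← Ne.eq_def] at this
    omega
  calc ∏ s, 2 * Kfac k l₀ π s
      ≤ ∏ s, if π s = 0 then 2 * (k * #{j | π j ≠ 0} + l₀) else 2 * k :=
        prod_le_prod' fun s _ => by
          have := Kfac_le k l₀ π s
          split_ifs at this ⊢ <;> omega
    _ = _ := by rw [prod_ite, prod_const, prod_const, hzeros, mul_comm]

theorem sum_prod_two_mul_Kfac_le (q : ℕ) :
    ∑ π : Fin m → SignType with #{s | π s ≠ 0} = q, ∏ s, 2 * Kfac k l₀ π s ≤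
      m.choose q * 2 ^ q * ((2 * k) ^ q * (2 * (k * q + l₀)) ^ (m - q)) := by
  have hcard := card_signPatterns_le (ι := Fin m) q
  rw [Fintype.card_fin] at hcard
  calc _ ≤ #{π : Fin m → SignType | #{s | π s ≠ 0} = q} •
          ((2 * k) ^ q * (2 * (k * q + l₀)) ^ (m - q)) :=
        sum_le_card_nsmul _ _ _ fun π hπ => (mem_filter.mp hπ).2 ▸ prod_two_mul_Kfac_le k l₀ π
    _ ≤ _ := Nat.mul_le_mul_right _ hcard

end Kfac

theorem Nmq_bound_general (m k l₀ q : ℕ) (hk : 2 ≤ k) (hq : q ≤ m) :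
    ((∑ π ∈ Finset.univ.filter
          (fun π : Fin m → SignType => (Finset.univ.filter fun s => π s ≠ 0).card = q),
        ∏ s : Fin m, 2 * Kfac k l₀ π s : ℕ) : ℝ) ≤
      (m.choose q : ℝ) * 2 ^ (m + q) * (k : ℝ) ^ m *
        ((q : ℝ) + (l₀ : ℝ) / (k : ℝ)) ^ (m - q) := by
  refine (Nat.cast_le.mpr (sum_prod_two_mul_Kfac_le k l₀ q)).trans_eq ?_
  have hk0 : (k : ℝ) ≠ 0 := Nat.cast_ne_zero.mpr (by omega)
  obtain ⟨r, rfl⟩ : ∃ r, m = q + r := ⟨m - q, by omega⟩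
  have hshift : (q : ℝ) + l₀ / k = (k * q + l₀) / k := by field_simp
  rw [Nat.add_sub_cancel_left, hshift, div_pow]
  push_cast
  simp only [mul_pow]
  field_simp
  ring

/-- The combinatorial bound on the partial sum `N_{m,q}` of the multi-commutator expansion:
summing `Π_{s=1}^m 2·K_s(π)` over sign patterns `π ∈ {−1,0,+1}^m` with exactly `q` nonzero
entries gives at most `C(m,q)·2^{m+q}·k^m·(q + l₀/k)^{m−q}`. -/
theorem Nmq_bound (m k l₀ q : ℕ) (hm : 1 ≤ m) (hk : 2 ≤ k) (hl₀ : 1 ≤ l₀) (hq : q ≤ m) :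
    ((∑ π ∈ Finset.univ.filter
          (fun π : Fin m → SignType => (Finset.univ.filter fun s => π s ≠ 0).card = q),
        ∏ s : Fin m, 2 * Kfac k l₀ π s : ℕ) : ℝ) ≤
      (m.choose q : ℝ) * 2 ^ (m + q) * (k : ℝ) ^ m *
        ((q : ℝ) + (l₀ : ℝ) / (k : ℝ)) ^ (m - q) :=
  Nmq_bound_general m k l₀ q hk hq
end

section
/- Let a > 0 be a real number and let q, m be integers with 0 ≤ q ≤ m and m ≥ 1. Let w > 0 be the unique positive real satisfying w·e^w = e·(m + a). Then (q + a)^{m − q} ≤ ((m+a)/w)^{(m+a) − (m+a)/w}. -/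
/-!
With `M = m + a`, the function `x ↦ (M - x) log x` is maximized on `(0, M]` at its critical point
`s`, where `M = s (log s + 1)`: the tangent-line bound `log x ≤ log s + x / s - 1` gives
`(M - x) log x ≤ (M - s) log s - s (x / s - 1)²`. The Lambert equation `w e^w = e M` says exactly
that `s = M / w = e^(w - 1)` is this critical point.
-/

open Real

lemma log_mul_sub_le_of_eq_mul_log_add_one {x s M : ℝ} (hx : 0 < x) (hs : 0 < s) (hxM : x ≤ M)
    (hM : M = s * (log s + 1)) : log x * (M - x) ≤ log s * (M - s) := by
  have tangent : log x ≤ log s + x / s - 1 := by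
    have := log_le_sub_one_of_pos (div_pos hx hs)
    rw [log_div hx.ne' hs.ne'] at this
    linarith
  calc log x * (M - x) ≤ (log s + x / s - 1) * (M - x) :=
        mul_le_mul_of_nonneg_right tangent (sub_nonneg.2 hxM)
    _ = log s * (M - s) - s * (x / s - 1) ^ 2 := by rw [hM]; field_simp; ring
    _ ≤ log s * (M - s) := sub_le_self _ (by positivity)

lemma rpow_sub_le_rpow_sub_of_eq_mul_log_add_one {x s M : ℝ} (hx : 0 < x) (hs : 0 < s)
    (hxM : x ≤ M) (hM : M = s * (log s + 1)) : x ^ (M - x) ≤ s ^ (M - s) := by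
  rw [rpow_def_of_pos hx, rpow_def_of_pos hs, exp_le_exp]
  exact log_mul_sub_le_of_eq_mul_log_add_one hx hs hxM hM

lemma log_div_eq_sub_one_of_mul_exp_eq {w M : ℝ} (hw : 0 < w) (h : w * exp w = exp 1 * M) :
    log (M / w) = w - 1 := by
  have : M / w = exp (w - 1) := by
    rw [exp_sub, div_eq_div_iff hw.ne' (exp_pos 1).ne']
    linarith
  rw [this, log_exp]

theorem maximization_lambertW_general (a : ℝ) (ha : 0 < a) (q m : ℕ) (hq : q ≤ m)
    (w : ℝ) (hw : 0 < w) (hwe : w * Real.exp w = Real.exp 1 * ((m : ℝ) + a)) :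
    ((q : ℝ) + a) ^ ((m : ℝ) - (q : ℝ)) ≤
      (((m : ℝ) + a) / w) ^ (((m : ℝ) + a) - ((m : ℝ) + a) / w) := by
  have hcrit : (m : ℝ) + a = (m + a) / w * (log ((m + a) / w) + 1) := by
    rw [log_div_eq_sub_one_of_mul_exp_eq hw hwe]
    field_simp
    ring
  have hqm : (q : ℝ) + a ≤ m + a := by gcongr
  rw [show (m : ℝ) - q = (m + a) - (q + a) by ring]
  exact rpow_sub_le_rpow_sub_of_eq_mul_log_add_one (by positivity) (by positivity) hqm hcrit

/-- The maximization step of the paper: for `a > 0`, integers `0 ≤ q ≤ m` with `m ≥ 1`, and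
`w > 0` the value of the Lambert W function at `e·(m+a)` (characterized by `w·e^w = e·(m+a)`),
one has `(q+a)^{m−q} ≤ ((m+a)/w)^{(m+a) − (m+a)/w}`. -/
theorem maximization_lambertW (a : ℝ) (ha : 0 < a) (q m : ℕ) (hq : q ≤ m) (hm : 1 ≤ m)
    (w : ℝ) (hw : 0 < w) (hwe : w * Real.exp w = Real.exp 1 * ((m : ℝ) + a)) :
    ((q : ℝ) + a) ^ ((m : ℝ) - (q : ℝ)) ≤
      (((m : ℝ) + a) / w) ^ (((m : ℝ) + a) - ((m : ℝ) + a) / w) :=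
  maximization_lambertW_general a ha q m hq w hw hwe
end

section
/- Let H and H∂ be complex square matrices of the same size and let β be a real number. Then for every real s, the map s ↦ exp(−β(H − s·H∂)) has derivative at s equal to ∫₀¹ exp(−β(1−κ)(H − s·H∂)) · (β·H∂) · exp(−β·κ·(H − s·H∂)) dκ (Duhamel's formula for the derivative of the matrix exponential). -/
open scoped Matrix.Norms.L2Operator

open NormedSpace

/-! Differentiating `κ ↦ exp((1 - κ)X) exp(κY)` and integrating over `[0, 1]` gives
`exp Y - exp X = ∫₀¹ exp((1 - κ)X) (Y - X) exp(κY) dκ`. Along an affine path `u ↦ X + uB`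
this writes the difference quotient at `t` as `∫₀¹ exp((1 - κ)(X + tB)) B exp(κ(X + uB)) dκ`,
which is continuous in `u`; its value at `u = t` is the derivative. -/

section RealAlgebra

variable {𝔸 : Type*} [NormedRing 𝔸] [NormedAlgebra ℝ 𝔸] [CompleteSpace 𝔸]

@[fun_prop]
lemma exp_continuous_of_real : Continuous (exp : 𝔸 → 𝔸) :=
  continuous_iff_continuousAt.2 fun x => (exp_analytic (𝕂 := ℝ) x).continuousAt

lemma hasDerivAt_exp_one_sub_smul_mul_exp_smul (X Y : 𝔸) (κ : ℝ) :
    HasDerivAt (fun κ : ℝ => exp ((1 - κ) • X) * exp (κ • Y))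
      (exp ((1 - κ) • X) * (Y - X) * exp (κ • Y)) κ := by
  have hleft : HasDerivAt (fun κ : ℝ => exp ((1 - κ) • X))
      ((-1 : ℝ) • (exp ((1 - κ) • X) * X)) κ :=
    (hasDerivAt_exp_smul_const X (1 - κ)).scomp κ ((hasDerivAt_id κ).const_sub 1)
  refine (hleft.mul (hasDerivAt_exp_smul_const' Y κ)).congr_deriv ?_
  rw [neg_one_smul]
  noncomm_ring

lemma exp_sub_exp_eq_intervalIntegral (X Y : 𝔸) :
    exp Y - exp X = ∫ κ in (0 : ℝ)..1, exp ((1 - κ) • X) * (Y - X) * exp (κ • Y) := by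
  rw [intervalIntegral.integral_eq_sub_of_hasDerivAt
    (fun κ _ => hasDerivAt_exp_one_sub_smul_mul_exp_smul X Y κ)
    (Continuous.intervalIntegrable (by fun_prop) 0 1)]
  simp

lemma hasDerivAt_exp_add_smul (X B : 𝔸) (t : ℝ) :
    HasDerivAt (fun u : ℝ => exp (X + u • B))
      (∫ κ in (0 : ℝ)..1, exp ((1 - κ) • (X + t • B)) * B * exp (κ • (X + t • B))) t := by
  set g : ℝ → 𝔸 := fun u =>
    ∫ κ in (0 : ℝ)..1, exp ((1 - κ) • (X + t • B)) * B * exp (κ • (X + u • B))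
  have hslope : ∀ u, exp (X + u • B) - exp (X + t • B) = (u - t) • g u := by
    intro u
    rw [exp_sub_exp_eq_intervalIntegral, ← intervalIntegral.integral_smul]
    congr 1 with κ
    rw [add_sub_add_left_eq_sub, ← sub_smul, mul_smul_comm, smul_mul_assoc]
  have hg : Continuous g :=
    intervalIntegral.continuous_parametric_intervalIntegral_of_continuous' (by fun_prop) 0 1
  rw [hasDerivAt_iff_tendsto_slope]
  refine ((hg.tendsto t).mono_left nhdsWithin_le_nhds).congr' ?_
  filter_upwards [self_mem_nhdsWithin] with u hu
  rw [slope_def_module, hslope, smul_smul, inv_mul_cancel₀ (sub_ne_zero.mpr hu), one_smul]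

end RealAlgebra

/-- Duhamel's formula (Eq. (15) of the paper): the derivative of
`s ↦ exp(−β(H − s·H∂))` is
`∫₀¹ exp(−β(1−κ)(H − s·H∂))·(β·H∂)·exp(−βκ(H − s·H∂)) dκ`. -/
theorem duhamel_formula {N : ℕ} (H Hpart : Matrix (Fin N) (Fin N) ℂ) (β : ℝ) (s : ℝ) :
    HasDerivAt
      (fun s : ℝ => NormedSpace.exp ((-(β : ℂ)) • (H - (s : ℂ) • Hpart)))
      (∫ κ in (0 : ℝ)..1,
        NormedSpace.exp ((-(β : ℂ) * (1 - (κ : ℂ))) • (H - (s : ℂ) • Hpart)) *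
          ((β : ℂ) • Hpart) *
          NormedSpace.exp ((-(β : ℂ) * (κ : ℂ)) • (H - (s : ℂ) • Hpart)))
      s := by
  have haffine : ∀ u : ℝ,
      (-(β : ℂ)) • (H - (u : ℂ) • Hpart) = (-(β : ℂ)) • H + u • ((β : ℂ) • Hpart) := by
    intro u
    rw [← Complex.coe_smul]
    module
  have hscale : ∀ r : ℝ,
      (-(β : ℂ) * r) • (H - (s : ℂ) • Hpart) =
        r • ((-(β : ℂ)) • H + s • ((β : ℂ) • Hpart)) := by
    intro r
    rw [← haffine, ← Complex.coe_smul, smul_smul, mul_comm]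
  simp_rw [haffine]
  refine (hasDerivAt_exp_add_smul ((-(β : ℂ)) • H) ((β : ℂ) • Hpart) s).congr_deriv ?_
  refine intervalIntegral.integral_congr fun κ _ => ?_
  rw [show -(β : ℂ) * (1 - κ) = -(β : ℂ) * ((1 - κ : ℝ) : ℂ) by push_cast; ring,
    hscale, hscale]
end

section
/- Let t₀ > 0 and t₁ > 0 be real numbers and m₀ ≥ 1 an integer. Then ∫₀^∞ (1 + t₁/t) · e^{−t/t₁} · min( (t/t₀)^{m₀}, 1 ) dt ≤ 2^{−m₀} · ( t₀/(m₀+1) + 2·t₁/m₀ ) + t₁ · (1 + 2·t₁/t₀) · e^{−t₀/(2·t₁)}. -/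
/-!
Split the half-line at `a = t₀ / 2`. On `(0, a]` bound `e^{-t/t₁}` by `1` and the minimum by
`(t/t₀)^{m₀}`: the factor `t^{m₀}` with `m₀ ≥ 1` absorbs the singularity of `t₁ / t`, leaving a
polynomial. On `(a, ∞)` bound the minimum by `1` and `t₁ / t` by `2 t₁ / t₀`, leaving an
exponential tail. The polynomial part is computed exactly and then relaxed to the stated form.
-/

open Real Set MeasureTheory

theorem setIntegral_Ioi_le_of_le_of_le {f g h : ℝ → ℝ} {a b : ℝ} (hab : a ≤ b)
    (hf : ∀ t ∈ Ioi a, 0 ≤ f t) (hg : IntegrableOn g (Ioc a b)) (hh : IntegrableOn h (Ioi b))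
    (hfg : ∀ t ∈ Ioc a b, f t ≤ g t) (hfh : ∀ t ∈ Ioi b, f t ≤ h t) :
    ∫ t in Ioi a, f t ≤ (∫ t in Ioc a b, g t) + ∫ t in Ioi b, h t := by
  classical
  have hIoc : Ioc a b ∩ Ioi a = Ioc a b := inter_eq_left.2 Ioc_subset_Ioi_self
  have hcompl : (Ioc a b)ᶜ ∩ Ioi a = Ioi b := by
    ext t
    simp only [mem_inter_iff, mem_compl_iff, mem_Ioc, mem_Ioi, not_and, not_le]
    exact ⟨fun ⟨h₁, h₂⟩ => h₁ h₂, fun h₁ => ⟨fun _ => h₁, hab.trans_lt h₁⟩⟩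
  have hg' : IntegrableOn g (Ioc a b) (volume.restrict (Ioi a)) := by
    rwa [IntegrableOn, Measure.restrict_restrict measurableSet_Ioc, hIoc]
  have hh' : IntegrableOn h (Ioc a b)ᶜ (volume.restrict (Ioi a)) := by
    rwa [IntegrableOn, Measure.restrict_restrict measurableSet_Ioc.compl, hcompl]
  -- Comparing with the piecewise majorant needs no measurability of `f`.
  calc ∫ t in Ioi a, f t ≤ ∫ t in Ioi a, (Ioc a b).piecewise g h t := by
        refine integral_mono_of_nonneg (ae_restrict_of_forall_mem measurableSet_Ioi hf)
          (Integrable.piecewise measurableSet_Ioc hg' hh')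
          (ae_restrict_of_forall_mem measurableSet_Ioi ?_)
        intro t ht
        by_cases htb : t ∈ Ioc a b
        · rw [piecewise_eq_of_mem _ _ _ htb]
          exact hfg t htb
        · rw [piecewise_eq_of_notMem _ _ _ htb]
          exact hfh t (hcompl ▸ ⟨htb, ht⟩)
    _ = (∫ t in Ioc a b, g t) + ∫ t in Ioi b, h t := by
        rw [integral_piecewise measurableSet_Ioc hg' hh',
          Measure.restrict_restrict measurableSet_Ioc, hIoc,
          Measure.restrict_restrict measurableSet_Ioc.compl, hcompl]

theorem intervalIntegral_div_pow (a c : ℝ) (n : ℕ) :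
    ∫ t in (0)..a, (t / c) ^ n = a * (a / c) ^ n / (n + 1) := by
  rw [funext fun t => div_pow t c n, intervalIntegral.integral_div, integral_pow,
    zero_pow n.succ_ne_zero, sub_zero]
  ring

theorem integral_exp_neg_div_Ioi {s : ℝ} (hs : 0 < s) (a : ℝ) :
    ∫ t in Ioi a, exp (-t / s) = s * exp (-a / s) := by
  have h := integral_exp_mul_Ioi (neg_lt_zero.2 (inv_pos.2 hs)) a
  simp only [neg_mul, ← neg_div, inv_mul_eq_div] at h
  rw [h]
  field_simp

theorem integral_tail_le_of_split {t₀ t₁ a : ℝ} (ht₀ : 0 < t₀) (ht₁ : 0 < t₁) (ha : 0 < a)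
    (k : ℕ) :
    (∫ t in Ioi (0 : ℝ), (1 + t₁ / t) * exp (-t / t₁) * min ((t / t₀) ^ (k + 1)) 1) ≤
      a * (a / t₀) ^ (k + 1) / (k + 2) + t₁ * (a / t₀) ^ (k + 1) / (k + 1) +
        t₁ * (1 + t₁ / a) * exp (-a / t₁) := by
  refine (setIntegral_Ioi_le_of_le_of_le
    (g := fun t => (t / t₀) ^ (k + 1) + t₁ / t₀ * (t / t₀) ^ k)
    (h := fun t => (1 + t₁ / a) * exp (-t / t₁)) ha.le ?_ ?_ ?_ ?_ ?_).trans_eq ?_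
  · intro t (ht : 0 < t)
    positivity
  · exact Continuous.integrableOn_Ioc (by fun_prop)
  · refine IntegrableOn.congr_fun
      ((exp_neg_integrableOn_Ioi a (inv_pos.2 ht₁)).const_mul (1 + t₁ / a))
      (fun t _ => ?_) measurableSet_Ioi
    rw [neg_mul, neg_div, div_eq_inv_mul t]
  · rintro t ⟨ht, -⟩
    have hexp : exp (-t / t₁) ≤ 1 :=
      exp_le_one_iff.2 (div_nonpos_of_nonpos_of_nonneg (by linarith) ht₁.le)
    calc (1 + t₁ / t) * exp (-t / t₁) * min ((t / t₀) ^ (k + 1)) 1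
        ≤ (1 + t₁ / t) * 1 * (t / t₀) ^ (k + 1) := by
          gcongr
          exact min_le_left _ _
      _ = (t / t₀) ^ (k + 1) + t₁ / t₀ * (t / t₀) ^ k := by
          rw [pow_succ]
          field_simp
  · intro t (ht : a < t)
    have ht0 : 0 < t := ha.trans ht
    calc (1 + t₁ / t) * exp (-t / t₁) * min ((t / t₀) ^ (k + 1)) 1
        ≤ (1 + t₁ / a) * exp (-t / t₁) * 1 := by
          gcongr
          exact min_le_right _ _
      _ = (1 + t₁ / a) * exp (-t / t₁) := mul_one _
  · rw [← intervalIntegral.integral_of_le ha.le, intervalIntegral.integral_add,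
      intervalIntegral.integral_const_mul, intervalIntegral_div_pow, intervalIntegral_div_pow,
      integral_const_mul, integral_exp_neg_div_Ioi ht₁]
    · rw [pow_succ]
      push_cast
      field_simp
      ring
    all_goals exact Continuous.intervalIntegrable (by fun_prop) _ _

/-- The integral estimate (Eq. (S14) of the supplementary material):
`∫₀^∞ (1 + t₁/t)·e^{−t/t₁}·min((t/t₀)^{m₀}, 1) dt
   ≤ 2^{−m₀}·(t₀/(m₀+1) + 2t₁/m₀) + t₁·(1 + 2t₁/t₀)·e^{−t₀/(2t₁)}`. -/
theorem integral_tail_estimate (t₀ t₁ : ℝ) (ht₀ : 0 < t₀) (ht₁ : 0 < t₁)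
    (m₀ : ℕ) (hm₀ : 1 ≤ m₀) :
    (∫ t in Set.Ioi (0 : ℝ),
        (1 + t₁ / t) * Real.exp (-t / t₁) * min ((t / t₀) ^ m₀) 1) ≤
      ((2 : ℝ) ^ m₀)⁻¹ * (t₀ / ((m₀ : ℝ) + 1) + 2 * t₁ / (m₀ : ℝ)) +
        t₁ * (1 + 2 * t₁ / t₀) * Real.exp (-t₀ / (2 * t₁)) := by
  obtain ⟨k, rfl⟩ := Nat.exists_eq_add_of_le' hm₀
  refine (integral_tail_le_of_split ht₀ ht₁ (half_pos ht₀) k).trans ?_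
  have hhalf : t₀ / 2 / t₀ = 2⁻¹ := by field_simp
  have htail : t₁ * (1 + t₁ / (t₀ / 2)) * exp (-(t₀ / 2) / t₁) =
      t₁ * (1 + 2 * t₁ / t₀) * exp (-t₀ / (2 * t₁)) := by
    field_simp
  rw [hhalf, htail, inv_pow]
  push_cast
  gcongr ?_ + _
  calc t₀ / 2 * (2 ^ (k + 1))⁻¹ / (k + 2) + t₁ * (2 ^ (k + 1))⁻¹ / (k + 1)
      = (2 ^ (k + 1))⁻¹ * (t₀ / (k + 1 + 1) / 2 + t₁ / (k + 1)) := by ring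
    _ ≤ (2 ^ (k + 1))⁻¹ * (t₀ / (k + 1 + 1) + 2 * t₁ / (k + 1)) := by
      gcongr _ * (?_ + ?_)
      · exact half_le_self (by positivity)
      · gcongr
        linarith
end

section
/- Let O be an operator on the n-site quantum chain and let S ⊆ {1,…,n}. Then the truncation satisfies ‖O^{(S)}‖ ≤ ‖O‖, i.e. the normalized partial trace over S^c tensored with the identity is a contraction in operator norm. -/
open scoped Matrix.Norms.L2Operator

/-- Truncation `O^{(S)} := d^{-|Sᶜ|} (tr_{Sᶜ} O) ⊗ 1_{Sᶜ}` of an operator to the subset `S`;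
summing over configurations of all `n` sites with the normalization `d^{-n}` realizes the
normalized partial trace over `Sᶜ`. -/
noncomputable def truncate {n d : ℕ} (O : ChainOp n d) (S : Finset (Fin n)) : ChainOp n d :=
  fun x y =>
    if ∀ i ∉ S, x i = y i then
      ((d : ℂ) ^ n)⁻¹ * ∑ z : Fin n → Fin d,
        O (fun i => if i ∈ S then x i else z i) (fun i => if i ∈ S then y i else z i)
    else 0

/-!
The truncation has a Stinespring form. Send `x` to `∑_z |x_S z_{Sᶜ}⟩ ⊗ |z⟩ ⊗ |x_{Sᶜ}⟩`, where `z`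
runs over all configurations. This map `V` satisfies `V† V = dⁿ · 1`, and
`O^{(S)} = d^{-n} V† (O ⊗ 1) V`: the environment register `z` forces both sides of `O` to carry
the same configuration on `Sᶜ`, and the copy of `x_{Sᶜ}` gives the factor `1_{Sᶜ}`. Since
`O ↦ O ⊗ 1` is a star algebra homomorphism of C⋆-algebras, it is contractive, and compressing
by a scaled isometry is contractive too.
-/

open scoped Kronecker

namespace Matrix

variable {𝕜 : Type*} [RCLike 𝕜] {m n : Type*} [Fintype m] [Fintype n] [DecidableEq m]
  [DecidableEq n]

lemma l2_opNorm_one_le : ‖(1 : Matrix n n 𝕜)‖ ≤ 1 := by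
  rw [← diagonal_one, l2_opNorm_diagonal]
  exact (pi_norm_le_iff_of_nonneg zero_le_one).mpr fun _ => by simp

lemma l2_opNorm_conjTranspose_mul_mul_le (V : Matrix m n 𝕜) (M : Matrix m m 𝕜) :
    ‖Vᴴ * M * V‖ ≤ ‖Vᴴ * V‖ * ‖M‖ :=
  calc ‖Vᴴ * M * V‖ ≤ ‖Vᴴ‖ * ‖M‖ * ‖V‖ :=
        (l2_opNorm_mul _ _).trans (mul_le_mul_of_nonneg_right (l2_opNorm_mul _ _) (norm_nonneg _))
    _ = ‖Vᴴ * V‖ * ‖M‖ := by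
        rw [l2_opNorm_conjTranspose, l2_opNorm_conjTranspose_mul_self]; ring

lemma l2_opNorm_inv_smul_conjTranspose_mul_mul_le {V : Matrix m n 𝕜} {c : 𝕜}
    (hV : Vᴴ * V = c • 1) (M : Matrix m m 𝕜) : ‖c⁻¹ • (Vᴴ * M * V)‖ ≤ ‖M‖ := by
  have h_gram : ‖Vᴴ * V‖ ≤ ‖c‖ := by
    rw [hV]
    exact (norm_smul_le c _).trans (mul_le_of_le_one_right (norm_nonneg c) l2_opNorm_one_le)
  calc ‖c⁻¹ • (Vᴴ * M * V)‖ ≤ ‖c‖⁻¹ * (‖c‖ * ‖M‖) := by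
        rw [norm_smul, norm_inv]
        gcongr
        exact (l2_opNorm_conjTranspose_mul_mul_le V M).trans
          (mul_le_mul_of_nonneg_right h_gram (norm_nonneg M))
    _ ≤ ‖M‖ := by
        rw [← mul_assoc]
        exact mul_le_of_le_one_left (norm_nonneg M) inv_mul_le_one

variable (m n) in
noncomputable def kroneckerOneStarAlgHom : Matrix m m ℂ →⋆ₐ[ℂ] Matrix (m × n) (m × n) ℂ where
  toFun M := M ⊗ₖ 1
  map_one' := one_kronecker_one
  map_mul' M N := by rw [← mul_kronecker_mul, one_mul]
  map_zero' := zero_kronecker _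
  map_add' M N := add_kronecker _ _ _
  commutes' r := by simp [Algebra.algebraMap_eq_smul_one, smul_kronecker]
  map_star' M := by simp [star_eq_conjTranspose, conjTranspose_kronecker]

lemma l2_opNorm_kronecker_one_le (M : Matrix m m ℂ) : ‖M ⊗ₖ (1 : Matrix n n ℂ)‖ ≤ ‖M‖ :=
  NonUnitalStarAlgHom.norm_apply_le (kroneckerOneStarAlgHom m n) M

end Matrix

open Matrix

section Dilation

variable {ι α : Type*} [Fintype ι] [DecidableEq ι]

lemma Finset.restrict_compl_eq_iff {S : Finset ι} {x y : ι → α} :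
    Sᶜ.restrict x = Sᶜ.restrict y ↔ ∀ i ∉ S, x i = y i := by
  simp [funext_iff, Finset.restrict]

lemma Finset.piecewise_eq_piecewise_and_restrict_compl_eq_iff {S : Finset ι} {x y : ι → α}
    (z : ι → α) :
    (S.piecewise x z = S.piecewise y z ∧ Sᶜ.restrict x = Sᶜ.restrict y) ↔ x = y := by
  refine ⟨fun ⟨hS, hSc⟩ => funext fun i => ?_, fun h => h ▸ ⟨rfl, rfl⟩⟩
  by_cases hi : i ∈ S
  · simpa [hi] using congrFun hS i
  · exact restrict_compl_eq_iff.mp hSc i hi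

variable (α) [DecidableEq α]

/-- `x ↦ ∑_z |S.piecewise x z⟩ ⊗ |z⟩ ⊗ |x_{Sᶜ}⟩`, which is `√|ι → α|` times an isometry. -/
def truncationDilation (S : Finset ι) :
    Matrix ((ι → α) × (ι → α) × (↥Sᶜ → α)) (ι → α) ℂ :=
  of fun a x => if a.1 = S.piecewise x a.2.1 ∧ a.2.2 = Sᶜ.restrict x then 1 else 0

variable {α}

lemma truncationDilation_apply (S : Finset ι) (a : (ι → α) × (ι → α) × (↥Sᶜ → α))
    (x : ι → α) :
    truncationDilation α S a x
      = if a.1 = S.piecewise x a.2.1 ∧ a.2.2 = Sᶜ.restrict x then 1 else 0 := rfl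

variable [Fintype α]

lemma sum_truncationDilation_mul {S : Finset ι} (x : ι → α)
    (f : (ι → α) × (ι → α) × (↥Sᶜ → α) → ℂ) :
    ∑ a, truncationDilation α S a x * f a = ∑ z, f (S.piecewise x z, z, Sᶜ.restrict x) := by
  simp only [truncationDilation_apply, ite_and, Fintype.sum_prod_type, ite_mul, one_mul, zero_mul]
  rw [Finset.sum_comm]
  simp

lemma truncationDilation_conjTranspose_mul_mul_apply {S : Finset ι}
    (K : Matrix ((ι → α) × (ι → α) × (↥Sᶜ → α)) ((ι → α) × (ι → α) × (↥Sᶜ → α)) ℂ)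
    (x y : ι → α) :
    ((truncationDilation α S)ᴴ * K * truncationDilation α S) x y
      = ∑ z, ∑ z', K (S.piecewise x z, z, Sᶜ.restrict x) (S.piecewise y z', z', Sᶜ.restrict y) := by
  have h_star : ∀ a, star (truncationDilation α S a x) = truncationDilation α S a x := by
    intro a; rw [truncationDilation_apply]; split_ifs <;> simp
  calc ((truncationDilation α S)ᴴ * K * truncationDilation α S) x y
      = ∑ b, truncationDilation α S b y * ∑ a, truncationDilation α S a x * K a b := by
        simp only [mul_apply, conjTranspose_apply, h_star, Finset.sum_mul, Finset.mul_sum]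
        exact Finset.sum_congr rfl fun _ _ => Finset.sum_congr rfl fun _ _ => by ring
    _ = _ := by
        simp only [sum_truncationDilation_mul]
        exact Finset.sum_comm

lemma truncationDilation_conjTranspose_mul_self (S : Finset ι) :
    (truncationDilation α S)ᴴ * truncationDilation α S = (Fintype.card (ι → α) : ℂ) • 1 := by
  ext x y
  rw [← Matrix.mul_one (truncationDilation α S)ᴴ, truncationDilation_conjTranspose_mul_mul_apply]
  simp only [one_apply, Prod.mk.injEq, and_left_comm (a := S.piecewise _ _ = _), ite_and,
    Finset.sum_ite_eq, Finset.mem_univ, if_true]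
  simp only [← ite_and, Finset.piecewise_eq_piecewise_and_restrict_compl_eq_iff,
    Finset.sum_boole]
  by_cases h : x = y <;> simp [h]

lemma truncationDilation_conjTranspose_mul_kronecker_one_mul_apply (S : Finset ι)
    (O : Matrix (ι → α) (ι → α) ℂ) (x y : ι → α) :
    ((truncationDilation α S)ᴴ *
        (O ⊗ₖ (1 : Matrix ((ι → α) × (↥Sᶜ → α)) ((ι → α) × (↥Sᶜ → α)) ℂ)) *
        truncationDilation α S) x y
      = if ∀ i ∉ S, x i = y i then ∑ z, O (S.piecewise x z) (S.piecewise y z) else 0 := by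
  rw [truncationDilation_conjTranspose_mul_mul_apply]
  simp [one_apply, ite_and, Finset.restrict_compl_eq_iff]

end Dilation

theorem truncate_norm_le_general (n d : ℕ)
    (O : ChainOp n d) (S : Finset (Fin n)) :
    ‖truncate O S‖ ≤ ‖O‖ := by
  have h_compression := l2_opNorm_inv_smul_conjTranspose_mul_mul_le
    (truncationDilation_conjTranspose_mul_self (α := Fin d) S) (O ⊗ₖ 1)
  refine (le_of_eq ?_).trans (h_compression.trans (l2_opNorm_kronecker_one_le O))
  congr 1
  ext x y
  rw [Matrix.smul_apply, truncationDilation_conjTranspose_mul_kronecker_one_mul_apply]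
  simp only [truncate, smul_eq_mul, mul_ite, mul_zero, Fintype.card_fun, Fintype.card_fin,
    Nat.cast_pow]
  rfl

/-- The normalized partial trace over `Sᶜ` tensored with the identity is a contraction in
the ℓ²→ℓ² operator norm: `‖O^{(S)}‖ ≤ ‖O‖`. -/
theorem truncate_norm_le (n d : ℕ) (hn : 1 ≤ n) (hd : 2 ≤ d)
    (O : ChainOp n d) (S : Finset (Fin n)) :
    ‖truncate O S‖ ≤ ‖O‖ :=
  truncate_norm_le_general n d O S
end

section
/- Let O be an operator on the n-site quantum chain, let S ⊆ {1,…,n}, and let ε ≥ 0. If ‖O·U − U·O‖ ≤ ε for every unitary matrix U that is supported on the complement S^c, then ‖O − O^{(S)}‖ ≤ ε. -/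
open scoped Matrix.Norms.L2Operator

/-!
Conjugating by the Weyl operators `W = Z_ψ X_a` of the sites in `Sᶜ` (a shift `X_a` of the
`Sᶜ`-coordinates followed by a character phase `Z_ψ`) and averaging over all of them yields the
truncation: character orthogonality kills the entries of `O` between configurations that differ
on `Sᶜ`, and the shifts average the remaining ones over `Sᶜ`. Each `W` is a unitary supported on
`Sᶜ`, and `O - W O W⋆ = (O W - W O) W⋆` has norm at most `ε`, hence so does the average
`O - O^{(S)}`.
-/

open Finset Matrix
open scoped BigOperators

theorem norm_sub_expect_unitary_conj_le {ι A : Type*} [Fintype ι] [Nonempty ι] [NormedRing A]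
    [StarRing A] [CStarRing A] [NormedSpace ℝ A] [Module ℚ≥0 A] (O : A) {U : ι → A}
    (hU : ∀ i, U i ∈ unitary A) {ε : ℝ} (hcomm : ∀ i, ‖O * U i - U i * O‖ ≤ ε) :
    ‖O - 𝔼 i, U i * O * star (U i)‖ ≤ ε := by
  have hterm : ∀ i, O - U i * O * star (U i) = (O * U i - U i * O) * star (U i) := fun i => by
    rw [sub_mul, mul_assoc O, Unitary.mul_star_self_of_mem (hU i), mul_one]
  calc ‖O - 𝔼 i, U i * O * star (U i)‖
      = ‖𝔼 i, (O * U i - U i * O) * star (U i)‖ := by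
        simp only [← hterm, expect_sub_distrib, Fintype.expect_const]
    _ ≤ 𝔼 i, ‖(O * U i - U i * O) * star (U i)‖ :=
        le_expect_of_subadditive norm_zero norm_add_le fun q x => by
          rw [← NNRat.cast_smul_eq_nnqsmul ℝ, norm_smul, NNRat.smul_def]; simp
    _ ≤ ε := expect_le univ_nonempty fun i _ => by
        rw [CStarRing.norm_mul_mem_unitary _ (Unitary.star_mem (hU i))]; exact hcomm i

theorem Matrix.diagonal_mem_unitary {m α : Type*} [Fintype m] [DecidableEq m] [Semiring α]
    [StarRing α] {v : m → α} (hv : ∀ i, v i ∈ unitary α) :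
    diagonal v ∈ unitary (Matrix m m α) := by
  simp only [Unitary.mem_iff, star_eq_conjTranspose, diagonal_conjTranspose,
    diagonal_mul_diagonal, ← diagonal_one]
  exact ⟨congrArg diagonal (funext fun i => (hv i).1),
    congrArg diagonal (funext fun i => (hv i).2)⟩

theorem Matrix.permMatrix_mem_unitary {m α : Type*} [Fintype m] [DecidableEq m] [Semiring α]
    [StarRing α] (σ : Equiv.Perm m) : σ.permMatrix α ∈ unitary (Matrix m m α) := by
  simp only [Unitary.mem_iff, star_eq_conjTranspose, conjTranspose_permMatrix,
    ← permMatrix_mul, mul_inv_cancel, inv_mul_cancel, permMatrix_one, and_self]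

theorem AddChar.apply_mem_unitary {G : Type*} [AddCommGroup G] [Finite G] (ψ : AddChar G ℂ)
    (x : G) : ψ x ∈ unitary ℂ := by
  simp [Unitary.mem_iff_star_mul_self, RCLike.star_def, RCLike.conj_mul]

theorem Matrix.expect_apply {ι m n α : Type*} [AddCommMonoid α] [Module ℚ≥0 α] (s : Finset ι)
    (f : ι → Matrix m n α) (x : m) (y : n) : (𝔼 i ∈ s, f i) x y = 𝔼 i ∈ s, f i x y :=
  map_expect (entryLinearMap ℚ≥0 α x y) f s

section Weyl
variable {n d : ℕ} [NeZero d] (S : Finset (Fin n))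

def complPart : (Fin n → Fin d) →+ (Fin n → Fin d) where
  toFun x i := if i ∈ S then 0 else x i
  map_zero' := by ext; simp
  map_add' x y := by ext i; split_ifs <;> simp [*]

theorem complPart_apply (x : Fin n → Fin d) (i : Fin n) :
    complPart S x i = if i ∈ S then 0 else x i := rfl

theorem complPart_eq_zero_iff {x : Fin n → Fin d} :
    complPart S x = 0 ↔ ∀ i ∉ S, x i = 0 := by
  simp [funext_iff, complPart_apply]

noncomputable def weylOp (a : Fin n → Fin d) (ψ : AddChar (Fin n → Fin d) ℂ) : ChainOp n d :=
  diagonal (fun x => ψ (complPart S x)) * Equiv.Perm.permMatrix ℂ (Equiv.subRight (complPart S a))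

theorem weylOp_apply (a : Fin n → Fin d) (ψ : AddChar (Fin n → Fin d) ℂ) (x y : Fin n → Fin d) :
    weylOp S a ψ x y = if x - complPart S a = y then ψ (complPart S x) else 0 := by
  simp [weylOp, diagonal_mul, Equiv.Perm.permMatrix, PEquiv.toMatrix_apply]

theorem weylOp_mem_unitary (a : Fin n → Fin d) (ψ : AddChar (Fin n → Fin d) ℂ) :
    weylOp S a ψ ∈ unitary (ChainOp n d) :=
  Submonoid.mul_mem _ (diagonal_mem_unitary fun _ => ψ.apply_mem_unitary _)
    (Matrix.permMatrix_mem_unitary _)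

theorem weylOp_supportedOn (a : Fin n → Fin d) (ψ : AddChar (Fin n → Fin d) ℂ) :
    SupportedOn (weylOp S a ψ) Sᶜ := by
  constructor
  · rintro x y ⟨i, hi, hxy⟩
    rw [weylOp_apply, if_neg]
    rintro rfl
    simp_all [complPart_apply]
  · intro x y x' y' hx hy hxy hxy'
    have hpart : complPart S x = complPart S x' := by
      ext i; by_cases hi : i ∈ S <;> simp [complPart_apply, hi, hx i]
    have hshift : x - complPart S a = y ↔ x' - complPart S a = y' := by
      simp only [funext_iff, Pi.sub_apply, complPart_apply]
      refine forall_congr' fun i => ?_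
      by_cases hi : i ∈ S
      · simp [hi, hxy i, hxy' i]
      · simp [hi, hx i, hy i]
    simp only [weylOp_apply, hpart, hshift]

theorem weylOp_conj_apply (a : Fin n → Fin d) (ψ : AddChar (Fin n → Fin d) ℂ) (O : ChainOp n d)
    (x y : Fin n → Fin d) :
    (weylOp S a ψ * O * star (weylOp S a ψ)) x y
      = ψ (complPart S (x - y)) * O (x - complPart S a) (y - complPart S a) := by
  simp [Matrix.mul_apply, weylOp_apply, star_eq_conjTranspose, ite_mul, mul_ite,
    apply_ite (starRingEnd ℂ), AddChar.map_sub_eq_div, div_eq_mul_inv, AddChar.inv_apply_eq_conj]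
  ring

theorem sum_sub_complPart {x y : Fin n → Fin d} (hxy : ∀ i ∉ S, x i = y i) (O : ChainOp n d) :
    ∑ a, O (x - complPart S a) (y - complPart S a)
      = ∑ z : Fin n → Fin d,
          O (fun i => if i ∈ S then x i else z i) (fun i => if i ∈ S then y i else z i) := by
  refine Fintype.sum_equiv (Equiv.subLeft x) _ _ fun a => ?_
  congr 1 <;> ext i <;> by_cases hi : i ∈ S <;> simp [complPart_apply, hi, hxy]

theorem expect_weylOp_conj (O : ChainOp n d) :
    𝔼 p : (Fin n → Fin d) × AddChar (Fin n → Fin d) ℂ,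
      weylOp S p.1 p.2 * O * star (weylOp S p.1 p.2) = truncate O S := by
  ext x y
  simp only [Matrix.expect_apply, weylOp_conj_apply]
  rw [← Finset.univ_product_univ, Finset.expect_product]
  simp only [← Finset.expect_mul, AddChar.expect_apply_eq_ite, complPart_eq_zero_iff,
    Pi.sub_apply, sub_eq_zero, truncate]
  split_ifs with hxy
  · rw [Fintype.expect_eq_sum_div_card]
    simp [sum_sub_complPart S hxy, div_eq_inv_mul]
  · simp

end Weyl

theorem truncate_close_of_almost_commutes_general (n d : ℕ) (hd : 2 ≤ d)
    (O : ChainOp n d) (S : Finset (Fin n)) (ε : ℝ)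
    (hcomm : ∀ U : ChainOp n d, U * U.conjTranspose = 1 → U.conjTranspose * U = 1 →
      SupportedOn U Sᶜ → ‖O * U - U * O‖ ≤ ε) :
    ‖O - truncate O S‖ ≤ ε := by
  have : NeZero d := ⟨by omega⟩
  have hW (p : (Fin n → Fin d) × AddChar (Fin n → Fin d) ℂ) := weylOp_mem_unitary S p.1 p.2
  have hclose := norm_sub_expect_unitary_conj_le O hW fun p =>
    hcomm _ (Unitary.mul_star_self_of_mem (hW p)) (Unitary.star_mul_self_of_mem (hW p))
      (weylOp_supportedOn S p.1 p.2)
  rwa [expect_weylOp_conj] at hclose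

/-- If `O` almost commutes (up to `ε` in ℓ²→ℓ² operator norm) with every unitary supported on
`Sᶜ`, then `O` is `ε`-close to its truncation `O^{(S)}`. -/
theorem truncate_close_of_almost_commutes (n d : ℕ) (hn : 1 ≤ n) (hd : 2 ≤ d)
    (O : ChainOp n d) (S : Finset (Fin n)) (ε : ℝ) (hε : 0 ≤ ε)
    (hcomm : ∀ U : ChainOp n d, U * U.conjTranspose = 1 → U.conjTranspose * U = 1 →
      SupportedOn U Sᶜ → ‖O * U - U * O‖ ≤ ε) :
    ‖O - truncate O S‖ ≤ ε :=
  truncate_close_of_almost_commutes_general n d hd O S ε hcomm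
end
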